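/- arXiv:1607.02917 — 2 statements merged into one kernel-verified Lean document; each statement's English description precedes it below -/
import Mathlib

section
/- For any independent uncertainty model in which the certainly-preferred relation of each agent is transitive, a matching μ is stable with probability 1 if and only if μ is super-stable in the stable marriage instance with partially ordered lists where each agent's partial order is exactly its certainly-preferred relation. -/
open Finset
open scoped Classical BigOperators

/-- A strict preference order over `Fin n`, encoded as a rank bijection:
`P a < P b` means the agent prefers `a` to `b`. -/
abbrev Pref (n : ℕ) := Equiv.Perm (Fin n)

/-- The pair `(m, w)` blocks the matching `μ` under profile `(PM, PW)`. -/
def blocks {n : ℕ} (μ : Equiv.Perm (Fin n)) (PM PW : Fin n → Pref n) (m w : Fin n) : Prop :=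
  μ m ≠ w ∧ PM m w < PM m (μ m) ∧ PW w m < PW w (μ.symm w)

/-- `μ` is stable under the profile `(PM, PW)`. -/
def stable {n : ℕ} (μ : Equiv.Perm (Fin n)) (PM PW : Fin n → Pref n) : Prop :=
  ∀ m w, ¬ blocks μ PM PW m w

/-- `p` is a probability distribution over preference orders. -/
def isDist {n : ℕ} (p : Pref n → ℝ) : Prop := (∀ P, 0 ≤ p P) ∧ ∑ P, p P = 1

/-- Stability probability of `μ` in the independent (lottery-style) model where each
man `i` draws from `pM i` and each woman `i` draws from `pW i`, independently. -/
noncomputable def stabProb {n : ℕ} (pM pW : Fin n → Pref n → ℝ) (μ : Equiv.Perm (Fin n)) : ℝ :=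
  ∑ PM : Fin n → Pref n, ∑ PW : Fin n → Pref n,
    if stable μ PM PW then (∏ i, pM i (PM i)) * (∏ i, pW i (PW i)) else 0

/-- Agent with distribution `p` certainly prefers `a` to `b` (prefers with probability 1). -/
def certPrefers {n : ℕ} (p : Pref n → ℝ) (a b : Fin n) : Prop :=
  ∑ P ∈ Finset.univ.filter (fun P : Pref n => P a < P b), p P = 1


lemma certPrefers_iff {n : ℕ} (p : Pref n → ℝ) (hp : isDist p) (a b : Fin n) :
    certPrefers p a b ↔ ∀ P, p P ≠ 0 → P a < P b := by
  obtain ⟨hnn, hsum⟩ := hp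
  unfold certPrefers
  have hsplit := Finset.sum_filter_add_sum_filter_not Finset.univ
    (fun P : Pref n => P a < P b) p
  constructor
  · intro h P hP
    by_contra hlt
    have hz : ∑ P ∈ Finset.univ.filter (fun P : Pref n => ¬ P a < P b), p P = 0 := by
      rw [h] at hsplit; linarith
    have := (Finset.sum_eq_zero_iff_of_nonneg (fun P _ => hnn P)).mp hz P
      (by simp only [Finset.mem_filter, Finset.mem_univ, true_and]; exact hlt)
    exact hP this
  · intro h
    have hz : ∑ P ∈ Finset.univ.filter (fun P : Pref n => ¬ P a < P b), p P = 0 :=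
      Finset.sum_eq_zero (fun P hP => by
        by_contra hne
        exact (Finset.mem_filter.mp hP).2 (h P hne))
    linarith

/-- for any independent uncertainty model in which each agent's
certainly-preferred relation is transitive, a matching `μ` is stable with probability 1
iff `μ` is super-stable in the SMP instance whose partial orders are exactly the
certainly-preferred relations, i.e. iff there is no unmatched pair `(m, w)` with
`¬ (μ(m) ≻^cert_m w)` and `¬ (μ(w) ≻^cert_w m)`. -/
theorem statement11 {n : ℕ} (pM pW : Fin n → Pref n → ℝ)
    (hM : ∀ i, isDist (pM i)) (hW : ∀ i, isDist (pW i))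
    (hMtrans : ∀ i a b c,
      certPrefers (pM i) a b → certPrefers (pM i) b c → certPrefers (pM i) a c)
    (hWtrans : ∀ i a b c,
      certPrefers (pW i) a b → certPrefers (pW i) b c → certPrefers (pW i) a c)
    (μ : Equiv.Perm (Fin n)) :
    stabProb pM pW μ = 1 ↔
      ¬ ∃ m w : Fin n, μ m ≠ w ∧
        ¬ certPrefers (pM m) (μ m) w ∧ ¬ certPrefers (pW w) (μ.symm w) m := by
  classical
  have hprob_nonneg : ∀ (PM PW : Fin n → Pref n),
      0 ≤ (∏ i, pM i (PM i)) * (∏ i, pW i (PW i)) :=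
    fun PM PW => mul_nonneg (Finset.prod_nonneg fun i _ => (hM i).1 _)
      (Finset.prod_nonneg fun i _ => (hW i).1 _)
  have h1 : ∑ PM : Fin n → Pref n, ∏ i, pM i (PM i) = 1 := by
    have h := Finset.prod_univ_sum (fun _ : Fin n => (Finset.univ : Finset (Pref n)))
      (fun i P => pM i P)
    rw [Fintype.piFinset_univ] at h
    rw [← h]
    exact Finset.prod_eq_one (fun i _ => (hM i).2)
  have h2 : ∑ PW : Fin n → Pref n, ∏ i, pW i (PW i) = 1 := by
    have h := Finset.prod_univ_sum (fun _ : Fin n => (Finset.univ : Finset (Pref n)))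
      (fun i P => pW i P)
    rw [Fintype.piFinset_univ] at h
    rw [← h]
    exact Finset.prod_eq_one (fun i _ => (hW i).2)
  have htotal : ∑ q : (Fin n → Pref n) × (Fin n → Pref n),
      (∏ i, pM i (q.1 i)) * (∏ i, pW i (q.2 i)) = 1 := by
    rw [Fintype.sum_prod_type]
    simp_rw [← Finset.mul_sum, h2, mul_one]
    exact h1
  have hstab : stabProb pM pW μ = ∑ q : (Fin n → Pref n) × (Fin n → Pref n),
      if stable μ q.1 q.2 then (∏ i, pM i (q.1 i)) * (∏ i, pW i (q.2 i)) else 0 := by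
    rw [stabProb, Fintype.sum_prod_type]
  have hkey : stabProb pM pW μ = 1 ↔
      ∀ PM PW : Fin n → Pref n,
        (∏ i, pM i (PM i)) * (∏ i, pW i (PW i)) ≠ 0 → stable μ PM PW := by
    rw [hstab, ← htotal]
    rw [Finset.sum_eq_sum_iff_of_le (fun q _ => by
      by_cases hs : stable μ q.1 q.2
      · simp [hs]
      · simp [hs, hprob_nonneg q.1 q.2])]
    constructor
    · intro h PM PW hne
      have := h (PM, PW) (Finset.mem_univ _)
      by_contra hs
      simp only [if_neg hs] at this
      exact hne this.symm
    · intro h q _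
      by_cases hs : stable μ q.1 q.2
      · simp [hs]
      · by_cases hz : (∏ i, pM i (q.1 i)) * (∏ i, pW i (q.2 i)) = 0
        · simp [hs, hz]
        · exact absurd (h q.1 q.2 hz) hs
  rw [hkey]
  constructor
  · -- all positive profiles stable → no super-blocking pair
    rintro h ⟨m, w, hmw, hcm, hcw⟩
    rw [certPrefers_iff _ (hM m)] at hcm
    rw [certPrefers_iff _ (hW w)] at hcw
    push_neg at hcm hcw
    obtain ⟨P0, hP0, hP0lt⟩ := hcm
    obtain ⟨Q0, hQ0, hQ0lt⟩ := hcw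
    -- pick a positive-prob preference for every other agent
    have hexM : ∀ i, ∃ P : Pref n, pM i P ≠ 0 := fun i =>
      Finset.exists_ne_zero_of_sum_ne_zero (by rw [(hM i).2]; norm_num) |>.imp
        (fun P hP => hP.2)
    have hexW : ∀ i, ∃ P : Pref n, pW i P ≠ 0 := fun i =>
      Finset.exists_ne_zero_of_sum_ne_zero (by rw [(hW i).2]; norm_num) |>.imp
        (fun P hP => hP.2)
    set PM : Fin n → Pref n := fun i => if i = m then P0 else (hexM i).choose with hPM
    set PW : Fin n → Pref n := fun i => if i = w then Q0 else (hexW i).choose with hPW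
    have hne : (∏ i, pM i (PM i)) * (∏ i, pW i (PW i)) ≠ 0 := by
      apply mul_ne_zero
      · rw [Finset.prod_ne_zero_iff]
        intro i _
        by_cases hi : i = m
        · subst hi; simpa [hPM] using hP0
        · simpa [hPM, hi] using (hexM i).choose_spec
      · rw [Finset.prod_ne_zero_iff]
        intro i _
        by_cases hi : i = w
        · subst hi; simpa [hPW] using hQ0
        · simpa [hPW, hi] using (hexW i).choose_spec
    have hst := h PM PW hne
    apply hst m w
    refine ⟨hmw, ?_, ?_⟩
    · have hPMm : PM m = P0 := by simp [hPM]
      rw [hPMm]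
      rcases lt_or_eq_of_le hP0lt with hlt | heq
      · exact hlt
      · exact absurd (P0.injective heq) (fun e => hmw e.symm)
    · have hPWw : PW w = Q0 := by simp [hPW]
      rw [hPWw]
      rcases lt_or_eq_of_le hQ0lt with hlt | heq
      · exact hlt
      · exfalso
        have := Q0.injective heq
        apply hmw
        rw [this, Equiv.apply_symm_apply]
  · -- no super-blocking pair → all positive profiles stable
    intro h PM PW hne m w hblk
    obtain ⟨hmw, hMlt, hWlt⟩ := hblk
    have hMne : pM m (PM m) ≠ 0 := by
      intro hz
      apply hne
      apply mul_eq_zero_of_left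
      exact Finset.prod_eq_zero (Finset.mem_univ m) hz
    have hWne : pW w (PW w) ≠ 0 := by
      intro hz
      apply hne
      apply mul_eq_zero_of_right
      exact Finset.prod_eq_zero (Finset.mem_univ w) hz
    push_neg at h
    rcases Classical.em (certPrefers (pM m) (μ m) w) with hc | hc
    · have := (certPrefers_iff _ (hM m) _ _).mp hc (PM m) hMne
      exact absurd hMlt (not_lt.mpr this.le)
    · have hc2 := h m w hmw hc
      have := (certPrefers_iff _ (hW w) _ _).mp hc2 (PW w) hWne
      exact absurd hWlt (not_lt.mpr this.le)
end

section
/- In an independent uncertainty model, a matching μ is super-stable with respect to the certainly-preferred partial orders if and only if μ is stable under every preference profile occurring with positive probability. Consequently, if the certainly-preferred relations are transitive and every linear extension of them occurs with positive probability, certain stability is equivalent to stability for all linear extensions. -/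
open Finset
open scoped Classical BigOperators

/-- `μ` is super-stable w.r.t. the certainly-preferred partial orders: no unmatched
pair `(m, w)` with `¬ (μ(m) ≻^cert_m w)` and `¬ (μ(w) ≻^cert_w m)`. -/
def superStable {n : ℕ} (pM pW : Fin n → Pref n → ℝ) (μ : Equiv.Perm (Fin n)) : Prop :=
  ¬ ∃ m w : Fin n, μ m ≠ w ∧
    ¬ certPrefers (pM m) (μ m) w ∧ ¬ certPrefers (pW w) (μ.symm w) m

lemma cert_iff {n : ℕ} {p : Pref n → ℝ} (hd : isDist p) {a b : Fin n} :
    certPrefers p a b ↔ ∀ P, 0 < p P → P a < P b := by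
  have hsplit := Finset.sum_filter_add_sum_filter_not Finset.univ
    (fun P : Pref n => P a < P b) p
  rw [hd.2] at hsplit
  unfold certPrefers
  constructor
  · intro h P hP
    by_contra hab
    have hz : ∑ P ∈ Finset.univ.filter (fun P : Pref n => ¬ P a < P b), p P = 0 := by
      linarith
    have := (Finset.sum_eq_zero_iff_of_nonneg (fun Q _ => hd.1 Q)).1 hz P
      (Finset.mem_filter.2 ⟨Finset.mem_univ P, hab⟩)
    linarith
  · intro h
    have hz : ∑ P ∈ Finset.univ.filter (fun P : Pref n => ¬ P a < P b), p P = 0 := by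
      apply Finset.sum_eq_zero
      intro Q hQ
      simp only [Finset.mem_filter] at hQ
      by_contra hne
      exact hQ.2 (h Q (lt_of_le_of_ne (hd.1 Q) (Ne.symm hne)))
    linarith

lemma exists_pos {n : ℕ} {p : Pref n → ℝ} (hd : isDist p) : ∃ P, 0 < p P := by
  by_contra h
  push_neg at h
  have : ∑ P, p P = 0 := Finset.sum_eq_zero fun P _ => le_antisymm (h P) (hd.1 P)
  rw [hd.2] at this; norm_num at this

lemma sum_prod_one {n : ℕ} {p : Fin n → Pref n → ℝ} (hd : ∀ i, isDist (p i)) :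
    (∑ P : Fin n → Pref n, ∏ i, p i (P i)) = 1 := by
  rw [← Fintype.piFinset_univ, ← Finset.prod_univ_sum]
  exact Finset.prod_eq_one fun i _ => (hd i).2

/-- in an independent uncertainty model, `μ` is super-stable w.r.t. the
certainly-preferred partial orders iff `μ` is stable under every preference profile
occurring with positive probability. Consequently, if the certainly-preferred relations
are transitive and every linear extension of them occurs with positive probability,
certain stability is equivalent to stability under all linear extensions. -/
theorem statement12 {n : ℕ} (pM pW : Fin n → Pref n → ℝ)
    (hM : ∀ i, isDist (pM i)) (hW : ∀ i, isDist (pW i)) (μ : Equiv.Perm (Fin n)) :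
    (superStable pM pW μ ↔
      ∀ PM PW : Fin n → Pref n,
        (∀ i, 0 < pM i (PM i)) → (∀ i, 0 < pW i (PW i)) → stable μ PM PW) ∧
    ((∀ i a b c,
        certPrefers (pM i) a b → certPrefers (pM i) b c → certPrefers (pM i) a c) →
     (∀ i a b c,
        certPrefers (pW i) a b → certPrefers (pW i) b c → certPrefers (pW i) a c) →
     (∀ (i : Fin n) (P : Pref n),
        (∀ a b, certPrefers (pM i) a b → P a < P b) → 0 < pM i P) →
     (∀ (i : Fin n) (P : Pref n),
        (∀ a b, certPrefers (pW i) a b → P a < P b) → 0 < pW i P) →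
      (stabProb pM pW μ = 1 ↔
        ∀ PM PW : Fin n → Pref n,
          (∀ i a b, certPrefers (pM i) a b → PM i a < PM i b) →
          (∀ i a b, certPrefers (pW i) a b → PW i a < PW i b) →
          stable μ PM PW)) := by
  -- Part 1
  have part1 : superStable pM pW μ ↔
      ∀ PM PW : Fin n → Pref n,
        (∀ i, 0 < pM i (PM i)) → (∀ i, 0 < pW i (PW i)) → stable μ PM PW := by
    constructor
    · intro hss PM PW hPM hPW m w hb
      obtain ⟨hne, hm, hw⟩ := hb
      exact hss ⟨m, w, hne,
        fun hc => absurd hm (lt_asymm ((cert_iff (hM m)).1 hc (PM m) (hPM m))),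
        fun hc => absurd hw (lt_asymm ((cert_iff (hW w)).1 hc (PW w) (hPW w)))⟩
    · rintro hB ⟨m, w, hne, hcm, hcw⟩
      rw [cert_iff (hM m)] at hcm
      push_neg at hcm
      obtain ⟨P, hPpos, hPnlt⟩ := hcm
      rw [cert_iff (hW w)] at hcw
      push_neg at hcw
      obtain ⟨Q, hQpos, hQnlt⟩ := hcw
      have hne' : μ.symm w ≠ m := fun h => hne (by rw [← h, Equiv.apply_symm_apply])
      have hPw : P w < P (μ m) :=
        lt_of_le_of_ne hPnlt (fun h => hne ((P.injective h).symm))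
      have hQm : Q m < Q (μ.symm w) :=
        lt_of_le_of_ne hQnlt (fun h => hne' ((Q.injective h).symm))
      choose PM0 hPM0 using fun i => exists_pos (hM i)
      choose PW0 hPW0 using fun i => exists_pos (hW i)
      refine hB (Function.update PM0 m P) (Function.update PW0 w Q) ?_ ?_ m w
        ⟨hne, ?_, ?_⟩
      · intro i
        by_cases hi : i = m
        · subst hi; simpa using hPpos
        · simpa [Function.update_of_ne hi] using hPM0 i
      · intro i
        by_cases hi : i = w
        · subst hi; simpa using hQpos
        · simpa [Function.update_of_ne hi] using hPW0 i
      · simpa using hPw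
      · simpa using hQm
  refine ⟨part1, fun _ _ hPosM hPosW => ?_⟩
  -- Part 2
  have hsum : ∑ PM : Fin n → Pref n, ∑ PW : Fin n → Pref n,
      (∏ i, pM i (PM i)) * (∏ i, pW i (PW i)) = 1 := by
    rw [← Finset.sum_mul_sum, sum_prod_one hM, sum_prod_one hW, one_mul]
  have hkey : stabProb pM pW μ = 1 ↔
      ∀ PM PW : Fin n → Pref n,
        (∀ i, 0 < pM i (PM i)) → (∀ i, 0 < pW i (PW i)) → stable μ PM PW := by
    constructor
    · intro h1 PM PW hPM hPW
      by_contra hns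
      have hzero : ∑ PM : Fin n → Pref n, ∑ PW : Fin n → Pref n,
          ((∏ i, pM i (PM i)) * (∏ i, pW i (PW i)) -
            (if stable μ PM PW then (∏ i, pM i (PM i)) * (∏ i, pW i (PW i)) else 0)) = 0 := by
        simp only [Finset.sum_sub_distrib]
        rw [hsum]
        have := h1
        unfold stabProb at this
        linarith
      have hterm : ∀ PM' PW' : Fin n → Pref n,
          0 ≤ (∏ i, pM i (PM' i)) * (∏ i, pW i (PW' i)) -
            (if stable μ PM' PW' then (∏ i, pM i (PM' i)) * (∏ i, pW i (PW' i)) else 0) := by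
        intro PM' PW'
        have hnn : 0 ≤ (∏ i, pM i (PM' i)) * (∏ i, pW i (PW' i)) :=
          mul_nonneg (Finset.prod_nonneg fun i _ => (hM i).1 _)
            (Finset.prod_nonneg fun i _ => (hW i).1 _)
        split <;> simp [hnn]
      have houter := (Finset.sum_eq_zero_iff_of_nonneg
        (fun PM' _ => Finset.sum_nonneg fun PW' _ => hterm PM' PW')).1 hzero PM
        (Finset.mem_univ _)
      have hinner := (Finset.sum_eq_zero_iff_of_nonneg
        (fun PW' _ => hterm PM PW')).1 houter PW (Finset.mem_univ _)
      rw [if_neg hns, sub_zero] at hinner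
      have hpos : 0 < (∏ i, pM i (PM i)) * (∏ i, pW i (PW i)) :=
        mul_pos (Finset.prod_pos fun i _ => hPM i) (Finset.prod_pos fun i _ => hPW i)
      linarith
    · intro hB
      unfold stabProb
      rw [← hsum]
      refine Finset.sum_congr rfl fun PM _ => Finset.sum_congr rfl fun PW _ => ?_
      split
      · rfl
      · rename_i hns
        by_cases hPM : ∀ i, 0 < pM i (PM i)
        · by_cases hPW : ∀ i, 0 < pW i (PW i)
          · exact absurd (hB PM PW hPM hPW) hns
          · push_neg at hPW
            obtain ⟨i, hi⟩ := hPW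
            have : pW i (PW i) = 0 := le_antisymm hi ((hW i).1 _)
            have h0 : (∏ j, pW j (PW j)) = 0 := Finset.prod_eq_zero (Finset.mem_univ i) this
            rw [h0, mul_zero]
        · push_neg at hPM
          obtain ⟨i, hi⟩ := hPM
          have : pM i (PM i) = 0 := le_antisymm hi ((hM i).1 _)
          have h0 : (∏ j, pM j (PM j)) = 0 := Finset.prod_eq_zero (Finset.mem_univ i) this
          rw [h0, zero_mul]
  rw [hkey]
  constructor
  · intro hB PM PW hextM hextW
    exact hB PM PW (fun i => hPosM i (PM i) (fun a b h => hextM i a b h))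
      (fun i => hPosW i (PW i) (fun a b h => hextW i a b h))
  · intro hE PM PW hPM hPW
    exact hE PM PW
      (fun i a b hc => (cert_iff (hM i)).1 hc (PM i) (hPM i))
      (fun i a b hc => (cert_iff (hW i)).1 hc (PW i) (hPW i))
end
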